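/- arXiv:2405.19506 — 5 statements merged into one kernel-verified Lean document; each statement's English description precedes it below -/
import Mathlib

section
/- Let p be a prime, n ≥ 0, and let G be a finite group acting transitively on a finite set W of cardinality p^n. If H ≤ G is a subgroup whose index [G : H] is not divisible by p, then H acts transitively on W. Equivalently, p divides [G : H] for every subgroup H ≤ G that does not act transitively on W. -/
/-- Let `p` be a prime, `n ≥ 0`, and let `G` be a finite group acting
transitively on a finite set `W` of cardinality `p ^ n`. If `H ≤ G` is a subgroup whose
index `[G : H]` is not divisible by `p`, then `H` acts transitively on `W`. -/
theorem subgroup_transitive_of_not_dvd_index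
    (p : ℕ) (hp : p.Prime) (n : ℕ) (G : Type*) [Group G] [Finite G]
    (W : Type*) [Finite W] [MulAction G W]
    (hcard : Nat.card W = p ^ n)
    (htrans : ∀ x y : W, ∃ g : G, g • x = y)
    (H : Subgroup G) (hH : ¬ p ∣ H.index) :
    ∀ x y : W, ∃ g ∈ H, g • x = y := by
  intro x y
  have : MulAction.IsPretransitive G W := ⟨htrans⟩
  set S := MulAction.stabilizer G x with hS
  have hSind : S.index = p ^ n := by
    rw [hS, MulAction.index_stabilizer_of_transitive, hcard]
  -- p^n divides the index of S ⊓ H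
  have h1 : (S ⊓ H).relIndex H * H.index = (S ⊓ H).index :=
    Subgroup.relIndex_mul_index inf_le_right
  have h2 : p ^ n ∣ (S ⊓ H).index := by
    rw [← hSind]; exact Subgroup.index_dvd_of_le inf_le_left
  have hcop : (p ^ n).Coprime H.index :=
    Nat.Coprime.pow_left _ ((Nat.Prime.coprime_iff_not_dvd hp).mpr hH)
  have h3 : p ^ n ∣ (S ⊓ H).relIndex H := by
    refine hcop.dvd_of_dvd_mul_right ?_
    rw [h1]; exact h2
  -- the relindex is the index of the stabilizer of x in H
  have hstab : MulAction.stabilizer H x = S.subgroupOf H := by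
    ext h
    simp [Subgroup.mem_subgroupOf, hS, MulAction.mem_stabilizer_iff]
    rfl
  have h4 : p ^ n ∣ (MulAction.stabilizer H x).index := by
    rw [hstab]
    rwa [Subgroup.inf_relIndex_right] at h3
  have horb : (MulAction.orbit H x).ncard = (MulAction.stabilizer H x).index :=
    (MulAction.index_stabilizer H x).symm
  have hle : (MulAction.orbit H x).ncard ≤ p ^ n := by
    rw [← hcard, ← Set.ncard_univ]
    exact Set.ncard_le_ncard (Set.subset_univ _) (Set.toFinite _)
  have hpos : 0 < (MulAction.orbit H x).ncard :=
    (Set.ncard_pos (Set.toFinite _)).mpr ⟨x, MulAction.mem_orbit_self x⟩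
  have heq : (MulAction.orbit H x).ncard = p ^ n :=
    Nat.le_antisymm hle (Nat.le_of_dvd hpos (by rwa [horb]))
  have huniv : MulAction.orbit H x = Set.univ := by
    refine Set.eq_of_subset_of_ncard_le (Set.subset_univ _) ?_
      (Set.toFinite (Set.univ : Set W))
    rw [heq, Set.ncard_univ, hcard]
  have hy : y ∈ MulAction.orbit H x := huniv ▸ Set.mem_univ y
  obtain ⟨⟨g, hg⟩, hgy⟩ := hy
  exact ⟨g, hg, hgy⟩
end

section
/- Let k be an algebraically closed field of characteristic p > 0, let U ⊆ k be an additive subgroup of order p^n, and let 0 ≤ i < p^n. Then the k-subspace of homogeneous polynomials P ∈ k[x,y] of degree i satisfying P(x + λy, y) = P(x, y) for all λ ∈ U is one-dimensional, spanned by y^i. -/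
/-!
Dehomogenizing at `y = 1` turns an invariant `P` of degree `i` into `f = P(t, 1)`, a polynomial
of degree at most `i`; evaluating `P(x + λy, y) = P(x, y)` at `(0, 1)` gives `f(λ) = f(0)` for
every `λ ∈ U`. As `|U| > i`, `f` is constant, and since a homogeneous polynomial is the
homogenization of its dehomogenization, `P = f(0) y^i`.
-/

open MvPolynomial

/-- The `k`-algebra substitution `x ↦ x + λ·y, y ↦ y` on polynomials in two variables. -/
noncomputable def shearSubst (k : Type*) [CommRing k] (lam : k) :
    MvPolynomial (Fin 2) k →ₐ[k] MvPolynomial (Fin 2) k :=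
  MvPolynomial.aeval ![X 0 + C lam * X 1, X 1]

theorem Polynomial.eq_C_eval_zero_of_eval_eq {R : Type*} [CommRing R] [IsDomain R]
    (f : Polynomial R) {S : Set R} (hS : f.natDegree < S.ncard)
    (h : ∀ a ∈ S, f.eval a = f.eval 0) : f = Polynomial.C (f.eval 0) := by
  have hfin : S.Finite := Set.finite_of_ncard_pos (by omega)
  refine Polynomial.eq_of_natDegree_lt_card_of_eval_eq' _ _ hfin.toFinset (by simpa) ?_
  rwa [Polynomial.natDegree_C, max_eq_left (Nat.zero_le _), ← Set.ncard_eq_toFinset_card S hfin]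

section

variable {R : Type*} [CommRing R]

theorem natDegree_aeval_X_one_le_degreeOf (P : MvPolynomial (Fin 2) R) :
    (aeval ![(Polynomial.X : Polynomial R), 1] P).natDegree ≤ P.degreeOf 0 := by
  conv_lhs => rw [P.as_sum, map_sum]
  refine Polynomial.natDegree_sum_le_of_forall_le _ _ fun d hd => ?_
  rw [aeval_monomial, Finsupp.prod_fintype _ _ (by simp), Fin.prod_univ_two]
  simp only [Matrix.cons_val_zero, Matrix.cons_val_one, one_pow, mul_one,
    ← Polynomial.C_eq_algebraMap]
  exact (Polynomial.natDegree_C_mul_X_pow_le _ _).trans (monomial_le_degreeOf 0 hd)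

theorem aeval_X_one_shearSubst (lam : R) (P : MvPolynomial (Fin 2) R) :
    aeval ![(Polynomial.X : Polynomial R), 1] (shearSubst R lam P) =
      (aeval ![(Polynomial.X : Polynomial R), 1] P).comp (Polynomial.X + Polynomial.C lam) := by
  rw [Polynomial.comp_eq_aeval, ← AlgHom.comp_apply, ← AlgHom.comp_apply]
  congr 1
  refine algHom_ext fun j => ?_
  fin_cases j <;> simp [shearSubst]

theorem shearSubst_C_mul_X_one_pow (lam c : R) (i : ℕ) :
    shearSubst R lam (C c * X 1 ^ i) = C c * X 1 ^ i := by
  simp [shearSubst]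

theorem eq_C_mul_X_one_pow_of_shearSubst_eq [IsDomain R] {P : MvPolynomial (Fin 2) R} {i : ℕ}
    (hP : P.IsHomogeneous i) {S : Set R} (hS : i < S.ncard)
    (hinv : ∀ lam ∈ S, shearSubst R lam P = P) :
    ∃ c, P = C c * X 1 ^ i := by
  set f := aeval ![(Polynomial.X : Polynomial R), 1] P
  have hdeg : f.natDegree < S.ncard :=
    ((natDegree_aeval_X_one_le_degreeOf P).trans (degreeOf_le_totalDegree P 0)).trans_lt
      (hP.totalDegree_le.trans_lt hS)
  have hconst : f = Polynomial.C (f.eval 0) := by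
    refine f.eq_C_eval_zero_of_eval_eq hdeg fun lam hlam => ?_
    calc f.eval lam = (f.comp (Polynomial.X + Polynomial.C lam)).eval 0 := by simp
      _ = f.eval 0 := by rw [← aeval_X_one_shearSubst, hinv lam hlam]
  exact ⟨f.eval 0,
    (Polynomial.homogenize_eq_of_isHomogeneous hP hconst).symm.trans (Polynomial.homogenize_C _ _)⟩

end

theorem invariants_of_shear_eq_span_ypow_general
    (p : ℕ) (k : Type*) [Field k]
    (n : ℕ) (U : AddSubgroup k) (hU : Nat.card U = p ^ n)
    (i : ℕ) (hi : i < p ^ n) :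
    {P : MvPolynomial (Fin 2) k |
        P.IsHomogeneous i ∧ ∀ lam ∈ U, shearSubst k lam P = P} =
      ↑(Submodule.span k {(X 1 : MvPolynomial (Fin 2) k) ^ i}) := by
  ext P
  simp only [Set.mem_ofPred_eq, SetLike.mem_coe, Submodule.mem_span_singleton, smul_eq_C_mul]
  constructor
  · rintro ⟨hP, hinv⟩
    have hcard : i < (U : Set k).ncard := by rwa [← Nat.card_coe_set_eq, SetLike.coe_sort_coe, hU]
    obtain ⟨c, rfl⟩ := eq_C_mul_X_one_pow_of_shearSubst_eq hP hcard hinv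
    exact ⟨c, rfl⟩
  · rintro ⟨c, rfl⟩
    exact ⟨isHomogeneous_C_mul_X_pow c 1 i, fun lam _ => shearSubst_C_mul_X_one_pow lam c i⟩

/-- Let `k` be an algebraically closed field of characteristic `p > 0`,
let `U ⊆ k` be an additive subgroup of order `p ^ n`, and let `0 ≤ i < p ^ n`. Then the
`k`-subspace of homogeneous polynomials `P ∈ k[x,y]` of degree `i` satisfying
`P(x + λy, y) = P(x, y)` for all `λ ∈ U` is one-dimensional, spanned by `y ^ i`. -/
theorem invariants_of_shear_eq_span_ypow
    (p : ℕ) (hp : p.Prime) (k : Type*) [Field k] [IsAlgClosed k] [CharP k p]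
    (n : ℕ) (U : AddSubgroup k) (hU : Nat.card U = p ^ n)
    (i : ℕ) (hi : i < p ^ n) :
    {P : MvPolynomial (Fin 2) k |
        P.IsHomogeneous i ∧ ∀ lam ∈ U, shearSubst k lam P = P} =
      ↑(Submodule.span k {(X 1 : MvPolynomial (Fin 2) k) ^ i}) :=
  invariants_of_shear_eq_span_ypow_general p k n U hU i hi
end

section
/- Let k be an algebraically closed field of characteristic p > 0, let U ⊆ k be an additive subgroup of order p^n, and let 0 < i < p^n. Then the k-vector space of pairs (P, Q) of homogeneous polynomials of degree i in k[x,y] satisfying Q(x + λy, y) = Q(x, y) and P(x + λy, y) = P(x, y) + λ·Q(x, y) for all λ ∈ U is two-dimensional, spanned by (y^i, 0) and (x·y^{i−1}, y^i). -/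
open MvPolynomial

noncomputable def e2 (i m : ℕ) : Fin 2 →₀ ℕ := Finsupp.single 0 m + Finsupp.single 1 (i - m)

lemma e2_zero (i m : ℕ) : e2 i m 0 = m := by simp [e2]
lemma e2_one (i m : ℕ) : e2 i m 1 = i - m := by simp [e2]
lemma e2_inj (i : ℕ) : Function.Injective (e2 i) := fun a b h => by
  have := congrArg (fun d => d 0) h; simpa [e2_zero] using this

lemma fin2_finsupp_eq (d : Fin 2 →₀ ℕ) : d = Finsupp.single 0 (d 0) + Finsupp.single 1 (d 1) := by
  ext j
  fin_cases j <;> simp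

lemma degree_fin2 (d : Fin 2 →₀ ℕ) : d.degree = d 0 + d 1 := by
  rw [Finsupp.degree_apply, Finset.sum_subset (Finset.subset_univ d.support)
    (fun x _ hx => by simpa using (Finsupp.notMem_support_iff.mp hx)), Fin.sum_univ_two]

lemma e2_mem {k : Type*} [CommRing k] {P : MvPolynomial (Fin 2) k} {i : ℕ}
    (hP : P.IsHomogeneous i) {d : Fin 2 →₀ ℕ} (hd : coeff d P ≠ 0) :
    d 0 ≤ i ∧ d = e2 i (d 0) := by
  have hdeg : d.degree = i := by
    by_contra h; exact hd (hP.coeff_eq_zero h)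
  rw [degree_fin2] at hdeg
  constructor
  · omega
  · ext j
    fin_cases j <;> simp [e2] <;> omega

lemma recon {k : Type*} [CommRing k] {P : MvPolynomial (Fin 2) k} {i : ℕ}
    (hP : P.IsHomogeneous i) :
    P = ∑ m ∈ Finset.range (i + 1), monomial (e2 i m) (coeff (e2 i m) P) := by
  classical
  ext d
  rw [MvPolynomial.coeff_sum]
  simp only [coeff_monomial]
  by_cases hd : d.degree = i
  · rw [degree_fin2] at hd
    have hdm : d = e2 i (d 0) := by ext j; fin_cases j <;> simp [e2] <;> omega
    rw [Finset.sum_eq_single (d 0)]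
    · rw [← hdm, if_pos rfl]
    · intro m _ hm
      rw [if_neg]
      intro h
      exact hm (by simpa [e2_zero] using congrArg (fun d => d 0) h)
    · intro h
      exact absurd (Finset.mem_range.mpr (by omega)) h
  · rw [hP.coeff_eq_zero hd]
    symm
    apply Finset.sum_eq_zero
    intro m hm
    rw [if_neg]
    intro h
    apply hd
    rw [← h, degree_fin2, e2_zero, e2_one]
    have := Finset.mem_range.mp hm
    omega

lemma aeval_eq_eval' {k : Type*} [CommRing k] (f : Fin 2 → k) (P : MvPolynomial (Fin 2) k) :
    aeval f P = eval f P := by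
  rw [← coe_aeval_eq_eval]; rfl

lemma eval_homog {k : Type*} [CommRing k] {P : MvPolynomial (Fin 2) k} {i : ℕ}
    (hP : P.IsHomogeneous i) (lam : k) :
    eval ![lam, 1] P = ∑ m ∈ Finset.range (i + 1), coeff (e2 i m) P * lam ^ m := by
  classical
  rw [eval_eq']
  calc ∑ d ∈ P.support, coeff d P * ∏ j, (![lam, 1] : Fin 2 → k) j ^ d j
      = ∑ d ∈ P.support, coeff d P * lam ^ (d 0) := by
        refine Finset.sum_congr rfl fun d _ => ?_
        rw [Fin.prod_univ_two]
        simp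
    _ = ∑ d ∈ (Finset.range (i + 1)).image (e2 i), coeff d P * lam ^ (d 0) := by
        refine Finset.sum_subset (fun d hd => ?_) (fun d _ hd => ?_)
        · obtain ⟨h1, h2⟩ := e2_mem hP (MvPolynomial.mem_support_iff.mp hd)
          exact Finset.mem_image.mpr ⟨d 0, Finset.mem_range.mpr (by omega), h2.symm⟩
        · rw [MvPolynomial.notMem_support_iff.mp hd, zero_mul]
    _ = ∑ m ∈ Finset.range (i + 1), coeff (e2 i m) P * lam ^ ((e2 i m) 0) :=
        Finset.sum_image fun a _ b _ h => e2_inj i h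
    _ = _ := by simp [e2_zero]

lemma poly_vanish {k : Type*} [Field k] (U : AddSubgroup k) {N : ℕ} (hN : 0 < N)
    (hU : Nat.card U = N) {i : ℕ} (hi : i < N) (c : ℕ → k)
    (hc : ∀ lam ∈ U, ∑ m ∈ Finset.range (i + 1), c m * lam ^ m = 0) :
    ∀ m ≤ i, c m = 0 := by
  classical
  have : Finite U := Nat.finite_of_card_ne_zero (by omega)
  have : Fintype U := Fintype.ofFinite U
  set f : Polynomial k := ∑ m ∈ Finset.range (i + 1), Polynomial.C (c m) * Polynomial.X ^ m
    with hf
  have hdeg : f.natDegree ≤ i := by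
    apply Polynomial.natDegree_sum_le_of_forall_le
    intro m hm
    exact (Polynomial.natDegree_C_mul_X_pow_le _ _).trans (by
      exact Nat.lt_succ_iff.mp (Finset.mem_range.mp hm))
  have hzero : f = 0 := by
    apply Polynomial.eq_zero_of_natDegree_lt_card_of_eval_eq_zero f
      (Subtype.val_injective (p := fun x => x ∈ U))
    · intro u
      rw [hf]
      simpa [Polynomial.eval_finset_sum] using hc u u.2
    · rw [Nat.card_eq_fintype_card] at hU
      omega
  intro m hm
  have := congrArg (fun g => Polynomial.coeff g m) hzero
  simpa [hf, Polynomial.finset_sum_coeff, Polynomial.coeff_C_mul, Polynomial.coeff_X_pow,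
    Finset.sum_ite_eq', Nat.lt_succ_iff, hm] using this

lemma shear_eval {k : Type*} [CommRing k] (lam : k) (P : MvPolynomial (Fin 2) k) :
    eval ![(0 : k), 1] (shearSubst k lam P) = eval ![lam, 1] P := by
  rw [← aeval_eq_eval', ← aeval_eq_eval', shearSubst, comp_aeval_apply]
  have : (fun i => (aeval (![0, 1] : Fin 2 → k)) (![X 0 + C lam * X 1, X 1] i))
      = ![lam, 1] := by
    funext j
    fin_cases j <;> simp
  rw [this]


/-- Let `k` be an algebraically closed field of characteristic `p > 0`,
let `U ⊆ k` be an additive subgroup of order `p ^ n`, and let `0 < i < p ^ n`. Then the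
`k`-vector space of pairs `(P, Q)` of homogeneous polynomials of degree `i` in `k[x,y]`
satisfying `Q(x + λy, y) = Q(x, y)` and `P(x + λy, y) = P(x, y) + λ·Q(x, y)` for all
`λ ∈ U` is two-dimensional, spanned by `(y^i, 0)` and `(x·y^(i-1), y^i)`. -/
theorem hom_V_to_nabla_eq_span
    (p : ℕ) (hp : p.Prime) (k : Type*) [Field k] [IsAlgClosed k] [CharP k p]
    (n : ℕ) (U : AddSubgroup k) (hU : Nat.card U = p ^ n)
    (i : ℕ) (hi0 : 0 < i) (hi : i < p ^ n) :
    {PQ : MvPolynomial (Fin 2) k × MvPolynomial (Fin 2) k |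
        PQ.1.IsHomogeneous i ∧ PQ.2.IsHomogeneous i ∧
        ∀ lam ∈ U, shearSubst k lam PQ.2 = PQ.2 ∧
          shearSubst k lam PQ.1 = PQ.1 + C lam * PQ.2} =
      ↑(Submodule.span k
        {((X 1 ^ i, 0) : MvPolynomial (Fin 2) k × MvPolynomial (Fin 2) k),
         ((X 0 * X 1 ^ (i - 1), X 1 ^ i) :
            MvPolynomial (Fin 2) k × MvPolynomial (Fin 2) k)}) ∧
    LinearIndependent k
      ![((X 1 ^ i, 0) : MvPolynomial (Fin 2) k × MvPolynomial (Fin 2) k),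
        ((X 0 * X 1 ^ (i - 1), X 1 ^ i) :
          MvPolynomial (Fin 2) k × MvPolynomial (Fin 2) k)] := by
  obtain ⟨j, rfl⟩ : ∃ j, i = j + 1 := ⟨i - 1, by omega⟩
  simp only [Nat.add_sub_cancel]
  have hNpos : 0 < p ^ n := pow_pos hp.pos n
  have hX1 : ∀ lam : k, shearSubst k lam (X 1 : MvPolynomial (Fin 2) k) = X 1 := by
    intro lam; simp [shearSubst]
  have hX0 : ∀ lam : k, shearSubst k lam (X 0 : MvPolynomial (Fin 2) k)
      = X 0 + C lam * X 1 := by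
    intro lam; simp [shearSubst]
  have he0 : e2 (j + 1) 0 = Finsupp.single 1 (j + 1) := by
    simp [e2]
  have he1 : e2 (j + 1) 1 = Finsupp.single 0 1 + Finsupp.single 1 j := by
    simp [e2]
  have hmon0 : ∀ c : k, monomial (e2 (j + 1) 0) c = c • (X 1 ^ (j + 1)) := by
    intro c
    rw [he0, smul_eq_C_mul, X_pow_eq_monomial, C_mul_monomial, mul_one]
  have hmon1 : ∀ c : k, monomial (e2 (j + 1) 1) c = c • (X 0 * X 1 ^ j) := by
    intro c
    rw [he1, smul_eq_C_mul, show (X 0 : MvPolynomial (Fin 2) k) = X 0 ^ 1 from (pow_one _).symm,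
      X_pow_eq_monomial, X_pow_eq_monomial, monomial_mul, C_mul_monomial]
    ring_nf
  have hsum : ∀ (c : ℕ → k) (lam : k), ∑ m ∈ Finset.range (j + 2), c m * lam ^ m
      = (∑ m ∈ Finset.range j, c (m + 2) * lam ^ (m + 2)) + c 1 * lam + c 0 := by
    intro c lam
    rw [Finset.sum_range_succ' (fun m => c m * lam ^ m) (j + 1),
      Finset.sum_range_succ' (fun m => c (m + 1) * lam ^ (m + 1)) j]
    norm_num
  constructor
  · ext z
    simp only [Set.mem_setOf_eq, SetLike.mem_coe, Submodule.mem_span_pair]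
    constructor
    · rintro ⟨hP, hQ, hcond⟩
      set P := z.1 with hPdef
      set Q := z.2 with hQdef
      set q : ℕ → k := fun m => coeff (e2 (j + 1) m) Q with hqdef
      set pc : ℕ → k := fun m => coeff (e2 (j + 1) m) P with hpcdef
      -- evaluate conditions
      have heval0 : ∀ (R : MvPolynomial (Fin 2) k), R.IsHomogeneous (j + 1) →
          eval ![(0 : k), 1] R = coeff (e2 (j + 1) 0) R := by
        intro R hR
        rw [eval_homog hR 0]
        rw [Finset.sum_eq_single_of_mem 0 (by simp)]
        · simp
        · intro m _ hm
          rw [zero_pow hm, mul_zero]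
      have hqcond : ∀ lam ∈ U, ∑ m ∈ Finset.range (j + 2), q m * lam ^ m = q 0 := by
        intro lam hlam
        have := congrArg (eval ![(0 : k), 1]) (hcond lam hlam).1
        rw [shear_eval, eval_homog hQ lam, heval0 Q hQ] at this
        exact this
      have hpcond : ∀ lam ∈ U,
          ∑ m ∈ Finset.range (j + 2), pc m * lam ^ m = pc 0 + lam * q 0 := by
        intro lam hlam
        have := congrArg (eval ![(0 : k), 1]) (hcond lam hlam).2
        rw [shear_eval, eval_homog hP lam, map_add, map_mul, eval_C,
          heval0 P hP, heval0 Q hQ] at this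
        exact this
      have hq0 : ∀ m, 1 ≤ m → m ≤ j + 1 → q m = 0 := by
        have := poly_vanish U hNpos hU hi
          (fun m => if m = 0 then 0 else q m) ?_
        · intro m h1 h2
          have := this m h2
          rwa [if_neg (by omega)] at this
        · intro lam hlam
          rw [hsum]
          have h1 := hqcond lam hlam
          rw [hsum] at h1
          norm_num [show ∀ m : ℕ, m + 2 ≠ 0 by omega]
          linear_combination h1
      have hp1 : pc 1 = q 0 ∧ ∀ m, 2 ≤ m → m ≤ j + 1 → pc m = 0 := by
        have := poly_vanish U hNpos hU hi
          (fun m => if m = 0 then 0 else if m = 1 then pc 1 - q 0 else pc m) ?_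
        · constructor
          · have h := this 1 (by omega)
            norm_num at h
            linear_combination h
          · intro m h1 h2
            have h := this m h2
            rwa [if_neg (by omega), if_neg (by omega)] at h
        · intro lam hlam
          rw [hsum]
          have h1 := hpcond lam hlam
          rw [hsum] at h1
          norm_num [show ∀ m : ℕ, m + 2 ≠ 0 by omega, show ∀ m : ℕ, m + 2 ≠ 1 by omega]
          linear_combination h1
      have hQeq : Q = monomial (e2 (j + 1) 0) (q 0) := by
        rw [recon hQ]
        apply Finset.sum_eq_single_of_mem 0 (by simp)
        intro m hm hm0
        rw [show coeff (e2 (j + 1) m) Q = q m from rfl,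
          hq0 m (by omega) (by { have := Finset.mem_range.mp hm; omega }), monomial_zero]
      have hPeq : P = monomial (e2 (j + 1) 0) (pc 0) + monomial (e2 (j + 1) 1) (pc 1) := by
        rw [recon hP]
        rw [← Finset.sum_subset (show ({0, 1} : Finset ℕ) ⊆ Finset.range (j + 2) by
          intro x hx; simp only [Finset.mem_insert, Finset.mem_singleton] at hx
          rcases hx with rfl | rfl <;> simp)]
        · rw [Finset.sum_pair (by norm_num : (0 : ℕ) ≠ 1)]
        · intro x hx hx'
          simp only [Finset.mem_insert, Finset.mem_singleton, not_or] at hx'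
          rw [show coeff (e2 (j + 1) x) P = pc x from rfl,
            hp1.2 x (by omega) (by { have := Finset.mem_range.mp hx; omega }), monomial_zero]
      refine ⟨pc 0, q 0, ?_⟩
      have : z = (P, Q) := rfl
      rw [this, Prod.ext_iff]
      constructor
      · simp only [Prod.fst_add, Prod.smul_fst]
        rw [hPeq, hmon0, hmon1, hp1.1]
      · simp only [Prod.snd_add, Prod.smul_snd]
        rw [hQeq, hmon0, smul_zero, zero_add]
    · rintro ⟨a, b, rfl⟩
      have h1 : (X 1 ^ (j + 1) : MvPolynomial (Fin 2) k).IsHomogeneous (j + 1) :=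
        isHomogeneous_X_pow _ _
      have h2 : (X 0 * X 1 ^ j : MvPolynomial (Fin 2) k).IsHomogeneous (j + 1) := by
        have := (isHomogeneous_X k 0).mul (isHomogeneous_X_pow (1 : Fin 2) j)
        simpa [add_comm] using this
      refine ⟨?_, ?_, ?_⟩
      · simp only [Prod.fst_add, Prod.smul_fst, smul_eq_C_mul]
        exact (h1.C_mul a).add (h2.C_mul b)
      · simp only [Prod.snd_add, Prod.smul_snd, smul_zero, zero_add, smul_eq_C_mul]
        exact h1.C_mul b
      · intro lam hlam
        constructor
        · simp only [Prod.snd_add, Prod.smul_snd, smul_zero, zero_add]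
          rw [map_smul, map_pow, hX1]
        · simp only [Prod.fst_add, Prod.smul_fst, Prod.snd_add, Prod.smul_snd, smul_zero,
            zero_add]
          rw [map_add, map_smul, map_smul, map_pow, hX1, map_mul, map_pow, hX0, hX1]
          simp only [smul_eq_C_mul]
          ring
  · rw [LinearIndependent.pair_iff]
    intro s t hst
    have hX1ne : (X 1 ^ (j + 1) : MvPolynomial (Fin 2) k) ≠ 0 := pow_ne_zero _ (X_ne_zero _)
    have h2 := congrArg Prod.snd hst
    simp only [Prod.snd_add, Prod.smul_snd, smul_zero, zero_add, Prod.snd_zero] at h2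
    have ht : t = 0 := by
      rcases smul_eq_zero.mp h2 with h | h
      · exact h
      · exact absurd h hX1ne
    have h1 := congrArg Prod.fst hst
    simp only [Prod.fst_add, Prod.smul_fst, Prod.fst_zero, ht, zero_smul, add_zero] at h1
    have hs : s = 0 := by
      rcases smul_eq_zero.mp h1 with h | h
      · exact h
      · exact absurd h hX1ne
    exact ⟨hs, ht⟩
end

section
/- Let k be an algebraically closed field of characteristic 2, λ ∈ k and m ≥ 1, and let g₁ = [[I_m, 0],[I_m, I_m]] and g₂ = [[I_m, 0],[J_λ, I_m]] be the 2m × 2m block matrices defining the representation A_m(λ) of C₂ × C₂. Then the commutant algebra {M ∈ Mat_{2m}(k) : M g₁ = g₁ M and M g₂ = g₂ M}, which is the endomorphism algebra End_{kC₂²}(A_m(λ)), has dimension m² + m over k. -/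
/-- The `m × m` (lower-triangular) Jordan block with eigenvalue `lam`. -/
def jordanBlock (k : Type*) [CommRing k] (m : ℕ) (lam : k) : Matrix (Fin m) (Fin m) k :=
  Matrix.of fun i j => if i = j then lam else if (i : ℕ) = (j : ℕ) + 1 then 1 else 0

/-- The block matrix `[[Iₘ, 0], [Iₘ, Iₘ]]` by which the first generator `g₁` of the Klein
four-group acts on `A_m(λ)`. -/
def kleinGenOne (k : Type*) [CommRing k] (m : ℕ) :
    Matrix (Fin m ⊕ Fin m) (Fin m ⊕ Fin m) k :=
  Matrix.fromBlocks 1 0 1 1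

/-- The block matrix `[[Iₘ, 0], [J_λ, Iₘ]]` by which the second generator `g₂` of the
Klein four-group acts on `A_m(λ)`. -/
def kleinGenTwo (k : Type*) [CommRing k] (m : ℕ) (lam : k) :
    Matrix (Fin m ⊕ Fin m) (Fin m ⊕ Fin m) k :=
  Matrix.fromBlocks 1 0 (jordanBlock k m lam) 1

/-!
Commuting with `g₁ = [[1, 0], [1, 1]]` forces `M = [[A, 0], [C, A]]`, and then commuting with
`g₂` means exactly that `A` commutes with `J_λ`, i.e. with the nilpotent shift `J_0`. The
centraliser of `J_0` consists of the lower-triangular Toeplitz matrices, an `m`-dimensional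
space, while `C` is arbitrary; hence the commutant has dimension `m + m²`, over any field.
-/

open Matrix

section Toeplitz

variable {R : Type*} [CommRing R] {m : ℕ}

variable (R m) in
def lowerToeplitz : (Fin m → R) →ₗ[R] Matrix (Fin m) (Fin m) R where
  toFun v := of fun i j => if (j : ℕ) ≤ i then v ⟨i - j, by omega⟩ else 0
  map_add' v w := by
    ext i j
    simp only [of_apply, Matrix.add_apply, Pi.add_apply]
    split_ifs <;> simp
  map_smul' c v := by
    ext i j
    simp only [of_apply, Matrix.smul_apply, Pi.smul_apply, RingHom.id_apply]
    split_ifs <;> simp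

lemma lowerToeplitz_apply (v : Fin m → R) (i j : Fin m) :
    lowerToeplitz R m v i j = if (j : ℕ) ≤ i then v ⟨i - j, by omega⟩ else 0 :=
  rfl

lemma lowerToeplitz_injective : Function.Injective (lowerToeplitz R m) := by
  intro v w h
  funext i
  simpa [lowerToeplitz_apply] using congrFun (congrFun h i) ⟨0, i.pos⟩

lemma jordanBlock_zero_apply (i j : Fin m) :
    jordanBlock R m 0 i j = if (i : ℕ) = j + 1 then 1 else 0 := by
  rcases eq_or_ne i j with rfl | h
  · simp [jordanBlock]
  · simp [jordanBlock, h]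

lemma mul_jordanBlock_zero_apply (A : Matrix (Fin m) (Fin m) R) (i j : Fin m) :
    (A * jordanBlock R m 0) i j = if h : (j : ℕ) + 1 < m then A i ⟨j + 1, h⟩ else 0 := by
  simp only [mul_apply, jordanBlock_zero_apply, mul_ite, mul_one, mul_zero]
  split_ifs with h
  · rw [Finset.sum_eq_single ⟨j + 1, h⟩ (fun l _ hl => if_neg fun hl' => hl (Fin.ext hl'))
      (by simp), if_pos rfl]
  · exact Finset.sum_eq_zero fun l _ => if_neg (by omega)

lemma jordanBlock_zero_mul_apply (A : Matrix (Fin m) (Fin m) R) (i j : Fin m) :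
    (jordanBlock R m 0 * A) i j = if h : 1 ≤ (i : ℕ) then A ⟨i - 1, by omega⟩ j else 0 := by
  simp only [mul_apply, jordanBlock_zero_apply, ite_mul, one_mul, zero_mul]
  split_ifs with h
  · rw [Finset.sum_eq_single ⟨i - 1, by omega⟩
      (fun l _ hl => if_neg fun hi => hl (by ext; simp; omega)) (by simp), if_pos (by simp; omega)]
  · exact Finset.sum_eq_zero fun l _ => if_neg (by omega)

lemma lowerToeplitz_commute_jordanBlock_zero (v : Fin m → R) :
    Commute (lowerToeplitz R m v) (jordanBlock R m 0) := by
  ext i j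
  rw [mul_jordanBlock_zero_apply, jordanBlock_zero_mul_apply]
  simp only [lowerToeplitz_apply]
  split_ifs <;> first | (exfalso; omega) | rfl | exact congrArg v (by ext; simp; omega)

lemma eq_lowerToeplitz_of_commute {A : Matrix (Fin m) (Fin m) R}
    (hA : Commute A (jordanBlock R m 0)) :
    A = lowerToeplitz R m fun i => A i ⟨0, i.pos⟩ := by
  suffices h : ∀ n (j : Fin m), (j : ℕ) = n → ∀ i, A i j = lowerToeplitz R m _ i j from
    ext fun i j => h j j rfl i
  intro n
  induction n with
  | zero =>
    intro j hj i
    simp [lowerToeplitz_apply, show j = ⟨0, i.pos⟩ from Fin.ext hj]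
  | succ n ih =>
    intro j hj i
    have hn : n < m := by omega
    have hshift := congrFun (congrFun hA i) ⟨n, hn⟩
    rw [mul_jordanBlock_zero_apply, jordanBlock_zero_mul_apply, dif_pos (by simp; omega)] at hshift
    have hn1 : n + 1 < m := hj ▸ j.isLt
    rw [show j = ⟨n + 1, hn1⟩ from Fin.ext hj, hshift]
    split_ifs with hi
    · rw [ih _ rfl]
      simp only [lowerToeplitz_apply]
      split_ifs <;> first | (exfalso; omega) | rfl | (congr 1; ext; simp; omega)
    · simp only [lowerToeplitz_apply, right_eq_ite_iff]
      omega

lemma commute_jordanBlock_zero_iff (A : Matrix (Fin m) (Fin m) R) :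
    Commute A (jordanBlock R m 0) ↔ A ∈ LinearMap.range (lowerToeplitz R m) :=
  ⟨fun h => ⟨_, (eq_lowerToeplitz_of_commute h).symm⟩,
    fun ⟨_, hv⟩ => hv ▸ lowerToeplitz_commute_jordanBlock_zero _⟩

lemma jordanBlock_eq_smul_one_add (lam : R) :
    jordanBlock R m lam = lam • 1 + jordanBlock R m 0 := by
  ext i j
  rcases eq_or_ne i j with rfl | h
  · simp [jordanBlock]
  · simp [jordanBlock, one_apply, h]

lemma commute_jordanBlock_iff (A : Matrix (Fin m) (Fin m) R) (lam : R) :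
    Commute A (jordanBlock R m lam) ↔ Commute A (jordanBlock R m 0) := by
  have hscalar : Commute A (lam • 1) := (Commute.one_right A).smul_right lam
  rw [jordanBlock_eq_smul_one_add]
  exact ⟨fun h => by simpa using h.sub_right hscalar, hscalar.add_right⟩

end Toeplitz

section Blocks

variable {R n : Type*} [CommRing R] [Fintype n] [DecidableEq n]

lemma commute_fromBlocks_one_zero_one_iff (A B C D X : Matrix n n R) :
    Commute (fromBlocks A B C D) (fromBlocks 1 0 X 1) ↔
      B * X = 0 ∧ X * B = 0 ∧ D * X = X * A := by
  simp only [Commute, SemiconjBy, fromBlocks_multiply, fromBlocks_inj, mul_one, one_mul,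
    mul_zero, zero_mul, add_zero, zero_add, add_eq_left, add_comm C, add_left_inj,
    right_eq_add]
  tauto

lemma mem_ker_mulRight_sub_mulLeft_iff (M g : Matrix n n R) :
    M ∈ LinearMap.ker (LinearMap.mulRight R g - LinearMap.mulLeft R g) ↔ Commute M g := by
  simp [sub_eq_zero, Commute, SemiconjBy]

end Blocks

section Commutant

variable {R : Type*} [CommRing R] {m : ℕ}

variable (R m) in
def lowerToeplitzBlocks :
    (Fin m → R) × Matrix (Fin m) (Fin m) R →ₗ[R]
      Matrix (Fin m ⊕ Fin m) (Fin m ⊕ Fin m) R where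
  toFun p := fromBlocks (lowerToeplitz R m p.1) 0 p.2 (lowerToeplitz R m p.1)
  map_add' p q := by simp [fromBlocks_add]
  map_smul' c p := by simp [fromBlocks_smul]

lemma lowerToeplitzBlocks_injective : Function.Injective (lowerToeplitzBlocks R m) := by
  rintro ⟨v, C⟩ ⟨w, D⟩ h
  obtain ⟨hvw, -, hCD, -⟩ := fromBlocks_inj.mp h
  exact Prod.ext (lowerToeplitz_injective hvw) hCD

lemma commutant_eq_range_lowerToeplitzBlocks (lam : R) :
    LinearMap.ker
        (LinearMap.mulRight R (kleinGenOne R m) - LinearMap.mulLeft R (kleinGenOne R m)) ⊓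
      LinearMap.ker
        (LinearMap.mulRight R (kleinGenTwo R m lam) - LinearMap.mulLeft R (kleinGenTwo R m lam)) =
      LinearMap.range (lowerToeplitzBlocks R m) := by
  ext M
  obtain ⟨A, B, C, D, rfl⟩ : ∃ A B C D, M = fromBlocks A B C D :=
    ⟨_, _, _, _, (fromBlocks_toBlocks M).symm⟩
  simp only [Submodule.mem_inf, mem_ker_mulRight_sub_mulLeft_iff, kleinGenOne, kleinGenTwo,
    commute_fromBlocks_one_zero_one_iff, mul_one, one_mul]
  constructor
  · rintro ⟨⟨rfl, -, rfl⟩, -, -, hA⟩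
    obtain ⟨v, rfl⟩ := (commute_jordanBlock_zero_iff _).mp
      ((commute_jordanBlock_iff _ lam).mp hA)
    exact ⟨(v, C), rfl⟩
  · rintro ⟨⟨v, C'⟩, hM⟩
    obtain ⟨rfl, rfl, rfl, rfl⟩ := fromBlocks_inj.mp hM
    simp only [zero_mul, mul_zero, true_and]
    exact (commute_jordanBlock_iff _ lam).mpr (lowerToeplitz_commute_jordanBlock_zero v)

end Commutant

theorem commutant_finrank_eq_general
    (k : Type*) [Field k]
    (lam : k) (m : ℕ) :
    Module.finrank k
      ↥(LinearMap.ker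
          (LinearMap.mulRight k (kleinGenOne k m) - LinearMap.mulLeft k (kleinGenOne k m)) ⊓
        LinearMap.ker
          (LinearMap.mulRight k (kleinGenTwo k m lam) -
            LinearMap.mulLeft k (kleinGenTwo k m lam))) = m ^ 2 + m := by
  rw [commutant_eq_range_lowerToeplitzBlocks, LinearMap.finrank_range_of_inj
    lowerToeplitzBlocks_injective, Module.finrank_prod, Module.finrank_fin_fun,
    Module.finrank_matrix, Module.finrank_self, Fintype.card_fin]
  ring

/-- Let `k` be an algebraically closed field of characteristic `2`,
`λ ∈ k` and `m ≥ 1`. The commutant algebra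
`{M ∈ Mat_{2m}(k) : M g₁ = g₁ M ∧ M g₂ = g₂ M}` — i.e. the endomorphism algebra
`End_{kC₂²}(A_m(λ))`, here written as the intersection of the kernels of the linear maps
`M ↦ M gⱼ - gⱼ M` — has dimension `m² + m` over `k`. -/
theorem commutant_finrank_eq
    (k : Type*) [Field k] [IsAlgClosed k] [CharP k 2]
    (lam : k) (m : ℕ) (hm : 1 ≤ m) :
    Module.finrank k
      ↥(LinearMap.ker
          (LinearMap.mulRight k (kleinGenOne k m) - LinearMap.mulLeft k (kleinGenOne k m)) ⊓
        LinearMap.ker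
          (LinearMap.mulRight k (kleinGenTwo k m lam) -
            LinearMap.mulLeft k (kleinGenTwo k m lam))) = m ^ 2 + m :=
  commutant_finrank_eq_general k lam m
end

section
/- Let k be an algebraically closed field of characteristic 2, λ ∈ k and m ≥ 2, and let A_m(λ) be the 2m-dimensional representation of C₂ × C₂ on k^{2m} defined by the block matrices below. Then the fixed-point space T = {v ∈ k^{2m} : g₁ v = v and g₂ v = v}, viewed as a module over the endomorphism algebra R = End_{kC₂²}(A_m(λ)) (acting by evaluation), is a cyclic R-module, and its unique maximal proper R-submodule consists exactly of those fixed vectors that lie in a subrepresentation of A_m(λ) isomorphic to A_{m−1}(λ). -/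
/-- Membership in the endomorphism algebra `R = End_{kC₂²}(A_m(λ))`: a `2m × 2m` matrix
commuting with the matrices of both generators. -/
def InCommutant (k : Type*) [CommRing k] (m : ℕ) (lam : k)
    (M : Matrix (Fin m ⊕ Fin m) (Fin m ⊕ Fin m) k) : Prop :=
  M * kleinGenOne k m = kleinGenOne k m * M ∧
    M * kleinGenTwo k m lam = kleinGenTwo k m lam * M

/-- The fixed-point space `T = {v : g₁ v = v ∧ g₂ v = v}` of `A_m(λ)`, identified with
`Hom_{C₂²}(𝟙, A_m(λ))`. -/
def fixedSet (k : Type*) [CommRing k] (m : ℕ) (lam : k) : Set (Fin m ⊕ Fin m → k) :=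
  {v | (kleinGenOne k m).mulVec v = v ∧ (kleinGenTwo k m lam).mulVec v = v}

/-- The set of fixed vectors lying in a subrepresentation of `A_m(λ)` isomorphic to
`A_i(λ)`, i.e. in the range of an injective linear map intertwining the `A_i(λ)`- and
`A_m(λ)`-actions. -/
def fixedInSub (k : Type*) [CommRing k] (m : ℕ) (lam : k) (i : ℕ) :
    Set (Fin m ⊕ Fin m → k) :=
  {v | v ∈ fixedSet k m lam ∧
    ∃ ι : (Fin i ⊕ Fin i → k) →ₗ[k] (Fin m ⊕ Fin m → k),
      Function.Injective ι ∧
      (kleinGenOne k m).mulVecLin ∘ₗ ι = ι ∘ₗ (kleinGenOne k i).mulVecLin ∧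
      (kleinGenTwo k m lam).mulVecLin ∘ₗ ι = ι ∘ₗ (kleinGenTwo k i lam).mulVecLin ∧
      v ∈ LinearMap.range ι}

/-- An `R`-submodule of the fixed-point space `T`, for `R` the commutant algebra:
a `k`-subspace contained in `T` and stable under every matrix commuting with both
generators. -/
def IsRSubmodule (k : Type*) [Field k] (m : ℕ) (lam : k)
    (N : Set (Fin m ⊕ Fin m → k)) : Prop :=
  ∃ N' : Submodule k (Fin m ⊕ Fin m → k), ↑N' = N ∧ N ⊆ fixedSet k m lam ∧
    ∀ M, InCommutant k m lam M → ∀ v ∈ N', M.mulVec v ∈ N'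

namespace KleinAux
open Matrix

variable {k : Type*} [Field k]

/-- The nilpotent lower shift matrix. -/
def Nm (k : Type*) [Field k] (m : ℕ) : Matrix (Fin m) (Fin m) k :=
  Matrix.of fun i j => if (i : ℕ) = (j : ℕ) + 1 then 1 else 0

lemma sum_fin_delta {n : ℕ} (f : Fin n → k) (c : ℕ) :
    (∑ r : Fin n, if (r : ℕ) = c then f r else 0) = if h : c < n then f ⟨c, h⟩ else 0 := by
  split_ifs with h
  · rw [Finset.sum_eq_single ⟨c, h⟩]
    · simp
    · intro b _ hb
      rw [if_neg (by simpa [Fin.ext_iff] using hb)]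
    · simp
  · apply Finset.sum_eq_zero
    intro r _
    rw [if_neg (by have := r.isLt; omega)]

lemma jordan_eq (m : ℕ) (lam : k) : jordanBlock k m lam = lam • 1 + Nm k m := by
  ext i j
  simp only [jordanBlock, Nm, Matrix.of_apply, Matrix.add_apply, Matrix.smul_apply,
    Matrix.one_apply, smul_eq_mul]
  by_cases h : i = j
  · subst h
    rw [if_pos rfl, if_pos rfl, if_neg (by omega), mul_one, add_zero]
  · rw [if_neg h, if_neg h, mul_zero, zero_add]

lemma Nm_pow (m t : ℕ) (i j : Fin m) :
    ((Nm k m) ^ t) i j = if (i : ℕ) = (j : ℕ) + t then 1 else 0 := by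
  induction t generalizing i j with
  | zero => simp [Matrix.one_apply, Fin.ext_iff]
  | succ t ih =>
    rw [pow_succ, Matrix.mul_apply]
    have : ∀ r : Fin m, ((Nm k m) ^ t) i r * (Nm k m) r j
        = if (r : ℕ) = (j : ℕ) + 1 then (if (i : ℕ) = (r : ℕ) + t then 1 else 0) else 0 := by
      intro r
      rw [ih, Nm]
      simp only [Matrix.of_apply]
      split_ifs <;> ring
    rw [Finset.sum_congr rfl fun r _ => this r, sum_fin_delta]
    have hi := i.isLt
    split_ifs with h1 h2 h3 <;> simp -failIfUnchanged only [Fin.val_mk] at * <;> first | rfl | omega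

lemma Nm_pow_self (m : ℕ) : (Nm k m) ^ m = 0 := by
  ext i j
  rw [Nm_pow]
  have := i.isLt
  simp only [Matrix.zero_apply]
  rw [if_neg (by omega)]

/-- polynomial in the shift with coefficients c -/
def polyN (m : ℕ) (c : Fin m → k) : Matrix (Fin m) (Fin m) k :=
  ∑ t : Fin m, c t • (Nm k m) ^ (t : ℕ)

lemma commute_N_polyN (m : ℕ) (c : Fin m → k) : Commute (Nm k m) (polyN m c) :=
  Commute.sum_right _ _ _ fun t _ => ((Commute.refl (Nm k m)).pow_right (t : ℕ)).smul_right (c t)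

lemma commute_J_polyN (m : ℕ) (lam : k) (c : Fin m → k) :
    Commute (jordanBlock k m lam) (polyN m c) := by
  rw [jordan_eq]
  exact Commute.add_left (((Commute.one_left (polyN m c))).smul_left lam) (commute_N_polyN m c)

lemma g1_mulVec (m : ℕ) (v : Fin m ⊕ Fin m → k) :
    (kleinGenOne k m).mulVec v = Sum.elim (v ∘ Sum.inl) (v ∘ Sum.inl + v ∘ Sum.inr) := by
  rw [kleinGenOne, Matrix.fromBlocks_mulVec]
  simp

lemma g2_mulVec (m : ℕ) (lam : k) (v : Fin m ⊕ Fin m → k) :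
    (kleinGenTwo k m lam).mulVec v
      = Sum.elim (v ∘ Sum.inl) ((jordanBlock k m lam).mulVec (v ∘ Sum.inl) + v ∘ Sum.inr) := by
  rw [kleinGenTwo, Matrix.fromBlocks_mulVec]
  simp

lemma mem_fixed_iff (m : ℕ) (lam : k) (v : Fin m ⊕ Fin m → k) :
    v ∈ fixedSet k m lam ↔ ∀ i, v (Sum.inl i) = 0 := by
  constructor
  · intro h i
    have := congrFun h.1 (Sum.inr i)
    rw [g1_mulVec] at this
    simpa using this
  · intro h
    have hx : v ∘ Sum.inl = 0 := funext h
    constructor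
    · rw [g1_mulVec, hx]
      funext p; cases p <;> simp [h]
    · rw [g2_mulVec, hx]
      funext p; cases p <;> simp [h]

lemma blockdiag_commutant (m : ℕ) (lam : k) (A : Matrix (Fin m) (Fin m) k)
    (hA : A * jordanBlock k m lam = jordanBlock k m lam * A) :
    InCommutant k m lam (Matrix.fromBlocks A 0 0 A) := by
  constructor
  · rw [kleinGenOne, Matrix.fromBlocks_multiply, Matrix.fromBlocks_multiply]
    simp
  · rw [kleinGenTwo, Matrix.fromBlocks_multiply, Matrix.fromBlocks_multiply]
    simp [hA]

lemma blockdiag_mulVec_fixed (m : ℕ) (lam : k) (A : Matrix (Fin m) (Fin m) k)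
    (v : Fin m ⊕ Fin m → k) (hv : v ∈ fixedSet k m lam) :
    (Matrix.fromBlocks A 0 0 A).mulVec v = Sum.elim (0 : Fin m → k) (A.mulVec (v ∘ Sum.inr)) := by
  have hx : v ∘ Sum.inl = 0 := funext ((mem_fixed_iff m lam v).1 hv)
  rw [Matrix.fromBlocks_mulVec, hx]
  simp

lemma mulVec_apply {n n' : ℕ} (M : Matrix (Fin n) (Fin n') k) (v : Fin n' → k) (i : Fin n) :
    M.mulVec v i = ∑ j, M i j * v j := rfl

lemma Npow_mulVec (m t : ℕ) (y : Fin m → k) (i : Fin m) :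
    ((Nm k m) ^ t).mulVec y i
      = if h : t ≤ (i : ℕ) then y ⟨(i : ℕ) - t, by omega⟩ else 0 := by
  have hi := i.isLt
  rw [mulVec_apply]
  by_cases ht : t ≤ (i : ℕ)
  · rw [dif_pos ht]
    have key : ∀ j : Fin m, ((Nm k m) ^ t) i j * y j
        = if (j : ℕ) = (i : ℕ) - t then y j else 0 := by
      intro j
      have hj := j.isLt
      rw [Nm_pow]
      by_cases h1 : (i : ℕ) = (j : ℕ) + t
      · rw [if_pos h1, if_pos (by omega), one_mul]
      · rw [if_neg h1, if_neg (by omega), zero_mul]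
    rw [Finset.sum_congr rfl fun j _ => key j, sum_fin_delta, dif_pos (by omega : (i:ℕ) - t < m)]
  · rw [dif_neg ht]
    apply Finset.sum_eq_zero
    intro j _
    have hj := j.isLt
    rw [Nm_pow, if_neg (by omega), zero_mul]

lemma polyN_mulVec (m : ℕ) (c : Fin m → k) (y : Fin m → k) (i : Fin m) :
    (polyN m c).mulVec y i = ∑ t : Fin m, c t * (((Nm k m) ^ (t : ℕ)).mulVec y i) := by
  rw [mulVec_apply]
  simp only [polyN, Matrix.sum_apply, Matrix.smul_apply, smul_eq_mul, Finset.sum_mul]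
  rw [Finset.sum_comm]
  apply Finset.sum_congr rfl
  intro t _
  rw [mulVec_apply, Finset.mul_sum]
  apply Finset.sum_congr rfl
  intro j _
  ring

/-- Coefficients solving the triangular system `∑_{t ≤ n} c_t Y_{n-t} = Z_n`. -/
def coeffs (Y Z : ℕ → k) : ℕ → k
  | n => (Z n - ∑ t ∈ (Finset.range n).attach, coeffs Y Z t * Y (n - t)) / Y 0
decreasing_by exact Finset.mem_range.mp t.2

lemma coeffs_spec (Y Z : ℕ → k) (hY0 : Y 0 ≠ 0) (n : ℕ) :
    ∑ t ∈ Finset.range (n + 1), coeffs Y Z t * Y (n - t) = Z n := by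
  rw [Finset.sum_range_succ, Nat.sub_self]
  rw [show coeffs Y Z n
      = (Z n - ∑ t ∈ (Finset.range n).attach, coeffs Y Z t * Y (n - t)) / Y 0 from by
    rw [coeffs]]
  rw [Finset.sum_attach (Finset.range n) (fun t => coeffs Y Z t * Y (n - t))]
  rw [div_mul_cancel₀ _ hY0]
  ring

lemma exists_apply_eq (m : ℕ) (hm : 0 < m) (y z : Fin m → k) (hy : y ⟨0, hm⟩ ≠ 0) :
    ∃ c : Fin m → k, (polyN m c).mulVec y = z := by
  let Y : ℕ → k := fun n => if h : n < m then y ⟨n, h⟩ else 0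
  let Z : ℕ → k := fun n => if h : n < m then z ⟨n, h⟩ else 0
  have hY0 : Y 0 ≠ 0 := by simpa [Y, dif_pos hm] using hy
  refine ⟨fun t => coeffs Y Z t, ?_⟩
  funext i
  have hi := i.isLt
  rw [polyN_mulVec]
  have key : ∀ t : Fin m, coeffs Y Z t * (((Nm k m) ^ (t : ℕ)).mulVec y i)
      = if (t : ℕ) ≤ (i : ℕ) then coeffs Y Z t * Y ((i : ℕ) - (t : ℕ)) else 0 := by
    intro t
    rw [Npow_mulVec]
    split_ifs with h
    · rw [show Y ((i : ℕ) - (t : ℕ)) = y ⟨(i : ℕ) - (t : ℕ), by omega⟩ from dif_pos _]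
    · rw [mul_zero]
  rw [Finset.sum_congr rfl fun t _ => key t]
  rw [Fin.sum_univ_eq_sum_range
    (fun t => if t ≤ (i : ℕ) then coeffs Y Z t * Y ((i : ℕ) - t) else 0) m]
  rw [← Finset.sum_subset (Finset.range_subset_range.2 (by omega : (i : ℕ) + 1 ≤ m))
    (fun t _ ht => if_neg (by simp at ht ⊢; omega))]
  rw [Finset.sum_congr rfl (fun t ht => if_pos (by simp at ht; omega))]
  rw [coeffs_spec Y Z hY0]
  exact dif_pos hi

lemma cyc (m : ℕ) (hm : 0 < m) (lam : k) (v : Fin m ⊕ Fin m → k) (hv : v ∈ fixedSet k m lam)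
    (hv0 : v (Sum.inr ⟨0, hm⟩) ≠ 0) (w : Fin m ⊕ Fin m → k) (hw : w ∈ fixedSet k m lam) :
    ∃ M, InCommutant k m lam M ∧ M.mulVec v = w := by
  obtain ⟨c, hc⟩ := exists_apply_eq m hm (v ∘ Sum.inr) (w ∘ Sum.inr) hv0
  refine ⟨Matrix.fromBlocks (polyN m c) 0 0 (polyN m c),
    blockdiag_commutant m lam _ (commute_J_polyN m lam c).symm.eq, ?_⟩
  rw [blockdiag_mulVec_fixed m lam _ v hv, hc]
  funext p
  cases p with
  | inl i => simpa using ((mem_fixed_iff m lam w).1 hw i).symm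
  | inr i => rfl

/-- The rectangular shift embedding matrix. -/
def sigma (k : Type*) [Field k] (m : ℕ) : Matrix (Fin m) (Fin (m - 1)) k :=
  Matrix.of fun i j => if (i : ℕ) = (j : ℕ) + 1 then 1 else 0

lemma sigma_mulVec (m : ℕ) (x : Fin (m - 1) → k) (i : Fin m) :
    (sigma k m).mulVec x i
      = if h : 1 ≤ (i : ℕ) then x ⟨(i : ℕ) - 1, by have := i.isLt; omega⟩ else 0 := by
  have hi := i.isLt
  rw [mulVec_apply]
  have key : ∀ j : Fin (m - 1), sigma k m i j * x j
      = if (j : ℕ) = (i : ℕ) - 1 then (if 1 ≤ (i : ℕ) then x j else 0) else 0 := by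
    intro j
    have hj := j.isLt
    simp only [sigma, Matrix.of_apply]
    by_cases h1 : (i : ℕ) = (j : ℕ) + 1
    · rw [if_pos h1, if_pos (by omega), if_pos (by omega), one_mul]
    · rw [if_neg h1]
      by_cases h2 : (j : ℕ) = (i : ℕ) - 1
      · rw [if_pos h2, if_neg (by omega), zero_mul]
      · rw [if_neg h2, zero_mul]
  rw [Finset.sum_congr rfl fun j _ => key j, sum_fin_delta]
  by_cases h : 1 ≤ (i : ℕ)
  · rw [dif_pos (by omega : (i : ℕ) - 1 < m - 1), if_pos h, dif_pos h]
  · rw [dif_neg h]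
    split_ifs <;> first | rfl | omega

lemma jordan_sigma (m : ℕ) (lam : k) :
    jordanBlock k m lam * sigma k m = sigma k m * jordanBlock k (m - 1) lam := by
  ext i j
  have hi := i.isLt
  have hj := j.isLt
  rw [Matrix.mul_apply, Matrix.mul_apply]
  have key1 : ∀ r : Fin m, jordanBlock k m lam i r * sigma k m r j
      = if (r : ℕ) = (j : ℕ) + 1 then jordanBlock k m lam i r else 0 := by
    intro r
    simp only [sigma, Matrix.of_apply]
    by_cases h1 : (r : ℕ) = (j : ℕ) + 1
    · rw [if_pos h1, if_pos h1, mul_one]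
    · rw [if_neg h1, if_neg h1, mul_zero]
  have key2 : ∀ r : Fin (m - 1), sigma k m i r * jordanBlock k (m - 1) lam r j
      = if (r : ℕ) = (i : ℕ) - 1
          then (if 1 ≤ (i : ℕ) then jordanBlock k (m - 1) lam r j else 0) else 0 := by
    intro r
    have hr := r.isLt
    simp only [sigma, Matrix.of_apply]
    by_cases h1 : (i : ℕ) = (r : ℕ) + 1
    · rw [if_pos h1, if_pos (by omega), if_pos (by omega), one_mul]
    · rw [if_neg h1]
      by_cases h2 : (r : ℕ) = (i : ℕ) - 1
      · rw [if_pos h2, if_neg (by omega), zero_mul]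
      · rw [if_neg h2, zero_mul]
  rw [Finset.sum_congr rfl fun r _ => key1 r, Finset.sum_congr rfl fun r _ => key2 r,
    sum_fin_delta, sum_fin_delta, dif_pos (by omega : (j : ℕ) + 1 < m)]
  simp only [jordanBlock, Matrix.of_apply, Fin.ext_iff, Fin.val_mk]
  split_ifs <;> first | rfl | omega

lemma sigma_mulVec_succ (m : ℕ) (x : Fin (m - 1) → k) (j : Fin (m - 1)) :
    (sigma k m).mulVec x ⟨(j : ℕ) + 1, by have := j.isLt; omega⟩ = x j := by
  rw [sigma_mulVec, dif_pos (by simp)]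
  exact congrArg x (Fin.ext (by simp only [Fin.val_mk]; omega))

lemma P_mulVec (m : ℕ) (w : Fin (m - 1) ⊕ Fin (m - 1) → k) :
    (Matrix.fromBlocks (sigma k m) 0 0 (sigma k m)).mulVec w
      = Sum.elim ((sigma k m).mulVec (w ∘ Sum.inl)) ((sigma k m).mulVec (w ∘ Sum.inr)) := by
  rw [Matrix.fromBlocks_mulVec]
  simp

lemma mem_fixedInSub_of (m : ℕ) (hm : 2 ≤ m) (lam : k) (v : Fin m ⊕ Fin m → k)
    (hv : v ∈ fixedSet k m lam) (h0 : v (Sum.inr ⟨0, by omega⟩) = 0) :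
    v ∈ fixedInSub k m lam (m - 1) := by
  refine ⟨hv, (Matrix.fromBlocks (sigma k m) 0 0 (sigma k m)).mulVecLin, ?_, ?_, ?_, ?_⟩
  · intro u u' h
    funext p
    cases p with
    | inl j =>
      have := congrFun h (Sum.inl ⟨(j : ℕ) + 1, by have := j.isLt; omega⟩)
      rw [Matrix.mulVecLin_apply, Matrix.mulVecLin_apply, P_mulVec, P_mulVec] at this
      simp only [Sum.elim_inl] at this
      rw [sigma_mulVec_succ, sigma_mulVec_succ] at this
      exact this
    | inr j =>
      have := congrFun h (Sum.inr ⟨(j : ℕ) + 1, by have := j.isLt; omega⟩)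
      rw [Matrix.mulVecLin_apply, Matrix.mulVecLin_apply, P_mulVec, P_mulVec] at this
      simp only [Sum.elim_inr] at this
      rw [sigma_mulVec_succ, sigma_mulVec_succ] at this
      exact this
  · rw [← Matrix.mulVecLin_mul, ← Matrix.mulVecLin_mul]
    congr 1
    rw [kleinGenOne, kleinGenOne, Matrix.fromBlocks_multiply, Matrix.fromBlocks_multiply]
    simp
  · rw [← Matrix.mulVecLin_mul, ← Matrix.mulVecLin_mul]
    congr 1
    rw [kleinGenTwo, kleinGenTwo, Matrix.fromBlocks_multiply, Matrix.fromBlocks_multiply]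
    simp [jordan_sigma]
  · refine ⟨Sum.elim 0 (fun j => v (Sum.inr ⟨(j : ℕ) + 1, by have := j.isLt; omega⟩)), ?_⟩
    rw [Matrix.mulVecLin_apply, P_mulVec]
    funext p
    cases p with
    | inl i =>
      simp only [Sum.elim_inl]
      rw [show (Sum.elim (0 : Fin (m-1) → k) _ ∘ Sum.inl) = (0 : Fin (m-1) → k) from rfl]
      rw [Matrix.mulVec_zero]
      exact ((mem_fixed_iff m lam v).1 hv i).symm
    | inr i =>
      simp only [Sum.elim_inr]
      have hi := i.isLt
      rw [sigma_mulVec]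
      by_cases h : 1 ≤ (i : ℕ)
      · rw [dif_pos h]
        show v (Sum.inr ⟨(i : ℕ) - 1 + 1, by omega⟩) = v (Sum.inr i)
        exact congrArg (fun t => v (Sum.inr t)) (Fin.ext (by simp only [Fin.val_mk]; omega))
      · rw [dif_neg h]
        rw [show i = ⟨0, by omega⟩ from Fin.ext (by simp only [Fin.val_mk]; omega)]
        exact h0.symm

lemma pow_intertwine {a b : ℕ} (A : Matrix (Fin a) (Fin b) k)
    (h : Nm k a * A = A * Nm k b) (t : ℕ) :
    (Nm k a) ^ t * A = A * (Nm k b) ^ t := by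
  induction t with
  | zero => simp
  | succ t ih =>
    rw [pow_succ, pow_succ, Matrix.mul_assoc, h, ← Matrix.mul_assoc, ih, Matrix.mul_assoc]

lemma row_zero (m : ℕ) (hm : 2 ≤ m) (A : Matrix (Fin m) (Fin (m - 1)) k)
    (h : Nm k m * A = A * Nm k (m - 1)) (j : Fin (m - 1)) : A ⟨0, by omega⟩ j = 0 := by
  have h2 := pow_intertwine A h (m - 1)
  rw [Nm_pow_self (m - 1), Matrix.mul_zero] at h2
  have hthis := congrFun (congrFun h2 ⟨m - 1, by omega⟩) j
  rw [Matrix.mul_apply] at hthis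
  have key : ∀ r : Fin m, ((Nm k m) ^ (m - 1)) ⟨m - 1, by omega⟩ r * A r j
      = if (r : ℕ) = 0 then A r j else 0 := by
    intro r
    have hr := r.isLt
    rw [Nm_pow]
    by_cases h1 : (r : ℕ) = 0
    · rw [if_pos (by simp only [Fin.val_mk]; omega), if_pos h1, one_mul]
    · rw [if_neg (by simp only [Fin.val_mk]; omega), if_neg h1, zero_mul]
  rw [Finset.sum_congr rfl fun r _ => key r, sum_fin_delta, dif_pos (by omega : 0 < m)] at hthis
  simpa using hthis

lemma inter_blocks (m : ℕ) (lam : k)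
    (P : Matrix (Fin m ⊕ Fin m) (Fin (m - 1) ⊕ Fin (m - 1)) k)
    (h1 : kleinGenOne k m * P = P * kleinGenOne k (m - 1))
    (h2 : kleinGenTwo k m lam * P = P * kleinGenTwo k (m - 1) lam) :
    P.toBlocks₁₂ = 0 ∧ P.toBlocks₂₂ = P.toBlocks₁₁ ∧
      Nm k m * P.toBlocks₁₁ = P.toBlocks₁₁ * Nm k (m - 1) := by
  set A := P.toBlocks₁₁ with hA
  set B := P.toBlocks₁₂ with hB
  set C := P.toBlocks₂₁ with hC
  set D := P.toBlocks₂₂ with hD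
  have hP : P = Matrix.fromBlocks A B C D := (Matrix.fromBlocks_toBlocks P).symm
  rw [hP, kleinGenOne, kleinGenOne, Matrix.fromBlocks_multiply, Matrix.fromBlocks_multiply,
    Matrix.fromBlocks_inj] at h1
  obtain ⟨e11, _, e21, _⟩ := h1
  have hB0 : B = 0 := by
    have : A = A + B := by
      calc A = 1 * A + 0 * C := by simp
      _ = A * 1 + B * 1 := e11
      _ = A + B := by simp
    exact (left_eq_add.mp this)
  have hDA : D = A := by
    have : A + C = C + D := by
      calc A + C = 1 * A + 1 * C := by simp
      _ = C * 1 + D * 1 := e21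
      _ = C + D := by simp
    have h' : A + C = D + C := by rw [this, add_comm]
    exact (add_right_cancel h').symm
  rw [hP, kleinGenTwo, kleinGenTwo, Matrix.fromBlocks_multiply, Matrix.fromBlocks_multiply,
    Matrix.fromBlocks_inj] at h2
  obtain ⟨_, _, f21, _⟩ := h2
  have hJA : jordanBlock k m lam * A = A * jordanBlock k (m - 1) lam := by
    have : jordanBlock k m lam * A + C = C + D * jordanBlock k (m - 1) lam := by
      calc jordanBlock k m lam * A + C = jordanBlock k m lam * A + 1 * C := by simp
      _ = C * 1 + D * jordanBlock k (m - 1) lam := f21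
      _ = C + D * jordanBlock k (m - 1) lam := by simp
    have h' : jordanBlock k m lam * A + C = A * jordanBlock k (m - 1) lam + C := by
      rw [this, hDA, add_comm]
    exact add_right_cancel h'
  refine ⟨hB0, hDA, ?_⟩
  have expand : lam • A + Nm k m * A = lam • A + A * Nm k (m - 1) := by
    have := hJA
    rw [jordan_eq, jordan_eq, Matrix.add_mul, Matrix.mul_add, Matrix.smul_mul,
      Matrix.mul_smul, Matrix.one_mul, Matrix.mul_one] at this
    exact this
  exact add_left_cancel expand

lemma fixedInSub_val_zero (m : ℕ) (hm : 2 ≤ m) (lam : k) (v : Fin m ⊕ Fin m → k)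
    (hv : v ∈ fixedInSub k m lam (m - 1)) : v (Sum.inr ⟨0, by omega⟩) = 0 := by
  obtain ⟨hfix, ι, hinj, hι1, hι2, u, hu⟩ := hv
  set P := LinearMap.toMatrix' ι with hPdef
  have hιP : ∀ w, ι w = P.mulVec w := by
    intro w
    rw [hPdef, ← Matrix.toLin'_apply, Matrix.toLin'_toMatrix']
  have key : ∀ (G : Matrix (Fin m ⊕ Fin m) (Fin m ⊕ Fin m) k)
      (G' : Matrix (Fin (m - 1) ⊕ Fin (m - 1)) (Fin (m - 1) ⊕ Fin (m - 1)) k),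
      G.mulVecLin ∘ₗ ι = ι ∘ₗ G'.mulVecLin → G * P = P * G' := by
    intro G G' h
    have h' := congrArg LinearMap.toMatrix' h
    rwa [← Matrix.toLin'_apply' G, ← Matrix.toLin'_apply' G', LinearMap.toMatrix'_comp,
      LinearMap.toMatrix'_comp, LinearMap.toMatrix'_toLin', LinearMap.toMatrix'_toLin'] at h'
  obtain ⟨hB, hDA, hN⟩ := inter_blocks m lam P (key _ _ hι1) (key _ _ hι2)
  have hufix : ∀ i, u (Sum.inl i) = 0 := by
    have h1u := LinearMap.congr_fun hι1 u
    simp only [LinearMap.comp_apply, Matrix.mulVecLin_apply] at h1u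
    have heq : ι ((kleinGenOne k (m - 1)).mulVec u) = ι u := by
      rw [← h1u, hu, hfix.1, ← hu]
    have huf := hinj heq
    intro i
    have hc := congrFun huf (Sum.inr i)
    rw [g1_mulVec] at hc
    simpa using hc
  have hvP : v = P.mulVec u := by rw [← hu, hιP u]
  rw [hvP]
  have hPb : P = Matrix.fromBlocks P.toBlocks₁₁ P.toBlocks₁₂ P.toBlocks₂₁ P.toBlocks₂₂ :=
    (Matrix.fromBlocks_toBlocks P).symm
  rw [hPb, Matrix.fromBlocks_mulVec]
  simp only [Sum.elim_inr, Pi.add_apply]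
  have t1 : P.toBlocks₂₁.mulVec (u ∘ Sum.inl) = 0 := by
    rw [show (u ∘ Sum.inl) = 0 from funext hufix, Matrix.mulVec_zero]
  have t2 : (P.toBlocks₂₂.mulVec (u ∘ Sum.inr)) ⟨0, by omega⟩ = 0 := by
    rw [hDA, mulVec_apply]
    apply Finset.sum_eq_zero
    intro j _
    rw [row_zero m hm P.toBlocks₁₁ hN j, zero_mul]
  rw [t1, t2]
  simp

lemma commutant_blocks (m : ℕ) (lam : k) (M : Matrix (Fin m ⊕ Fin m) (Fin m ⊕ Fin m) k)
    (h : InCommutant k m lam M) :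
    M.toBlocks₁₂ = 0 ∧
      M.toBlocks₂₂ * jordanBlock k m lam = jordanBlock k m lam * M.toBlocks₂₂ := by
  obtain ⟨h1, h2⟩ := h
  set A := M.toBlocks₁₁ with hA
  set B := M.toBlocks₁₂ with hB
  set C := M.toBlocks₂₁ with hC
  set D := M.toBlocks₂₂ with hD
  have hM : M = Matrix.fromBlocks A B C D := (Matrix.fromBlocks_toBlocks M).symm
  rw [hM, kleinGenOne, Matrix.fromBlocks_multiply, Matrix.fromBlocks_multiply,
    Matrix.fromBlocks_inj] at h1
  obtain ⟨e11, _, e21, _⟩ := h1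
  have hB0 : B = 0 := by
    have : A + B = A := by
      calc A + B = A * 1 + B * 1 := by simp
      _ = 1 * A + 0 * C := e11
      _ = A := by simp
    exact (add_eq_left.mp this)
  have hDA : D = A := by
    have : C + D = A + C := by
      calc C + D = C * 1 + D * 1 := by simp
      _ = 1 * A + 1 * C := e21
      _ = A + C := by simp
    have h' : C + D = C + A := by rw [this, add_comm]
    exact add_left_cancel h'
  rw [hM, kleinGenTwo, Matrix.fromBlocks_multiply, Matrix.fromBlocks_multiply,
    Matrix.fromBlocks_inj] at h2
  obtain ⟨_, _, f21, _⟩ := h2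
  refine ⟨hB0, ?_⟩
  have : C + D * jordanBlock k m lam = jordanBlock k m lam * A + C := by
    calc C + D * jordanBlock k m lam
        = C * 1 + D * jordanBlock k m lam := by simp
    _ = jordanBlock k m lam * A + 1 * C := f21
    _ = jordanBlock k m lam * A + C := by simp
  have h' : C + D * jordanBlock k m lam = C + jordanBlock k m lam * D := by
    rw [this, hDA, add_comm]
  exact add_left_cancel h'

lemma mulVec_entry0 (m : ℕ) (hm : 0 < m) (lam : k) (D : Matrix (Fin m) (Fin m) k)
    (hD : D * jordanBlock k m lam = jordanBlock k m lam * D) (y : Fin m → k)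
    (hy : y ⟨0, hm⟩ = 0) : (D.mulVec y) ⟨0, hm⟩ = 0 := by
  have hDN : D * Nm k m = Nm k m * D := by
    have h' := hD
    rw [jordan_eq, Matrix.mul_add, Matrix.add_mul, Matrix.mul_smul, Matrix.smul_mul,
      Matrix.mul_one, Matrix.one_mul] at h'
    exact add_left_cancel h'
  rw [mulVec_apply]
  apply Finset.sum_eq_zero
  intro j _
  have hj := j.isLt
  by_cases hj0 : (j : ℕ) = 0
  · rw [show j = ⟨0, hm⟩ from Fin.ext (by simp only [Fin.val_mk]; omega), hy, mul_zero]
  · have hthis := congrFun (congrFun hDN ⟨0, hm⟩) ⟨(j : ℕ) - 1, by omega⟩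
    rw [Matrix.mul_apply, Matrix.mul_apply] at hthis
    have keyL : ∀ r : Fin m, D ⟨0, hm⟩ r * Nm k m r ⟨(j : ℕ) - 1, by omega⟩
        = if (r : ℕ) = ((j : ℕ) - 1) + 1 then D ⟨0, hm⟩ r else 0 := by
      intro r
      simp only [Nm, Matrix.of_apply, Fin.val_mk]
      by_cases h1 : (r : ℕ) = ((j : ℕ) - 1) + 1
      · rw [if_pos h1, if_pos h1, mul_one]
      · rw [if_neg h1, if_neg h1, mul_zero]
    have keyR : ∀ r : Fin m, Nm k m ⟨0, hm⟩ r * D r ⟨(j : ℕ) - 1, by omega⟩ = 0 := by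
      intro r
      simp only [Nm, Matrix.of_apply, Fin.val_mk]
      rw [if_neg (by omega), zero_mul]
    have hL : (∑ r : Fin m, D ⟨0, hm⟩ r * Nm k m r ⟨(j : ℕ) - 1, by omega⟩)
        = D ⟨0, hm⟩ ⟨(j : ℕ) - 1 + 1, by omega⟩ := by
      rw [Finset.sum_congr rfl fun r _ => keyL r, sum_fin_delta,
        dif_pos (by omega : (j : ℕ) - 1 + 1 < m)]
    have hR : (∑ r : Fin m, Nm k m ⟨0, hm⟩ r * D r ⟨(j : ℕ) - 1, by omega⟩) = 0 :=
      Finset.sum_eq_zero fun r _ => keyR r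
    rw [hL, hR] at hthis
    rw [show j = (⟨(j : ℕ) - 1 + 1, by omega⟩ : Fin m) from
      Fin.ext (by simp only [Fin.val_mk]; omega), hthis, zero_mul]

lemma fixedInSub_eq (m : ℕ) (hm : 2 ≤ m) (lam : k) :
    fixedInSub k m lam (m - 1)
      = {v | (∀ i, v (Sum.inl i) = 0) ∧ v (Sum.inr ⟨0, by omega⟩) = 0} := by
  ext v
  constructor
  · intro hv
    exact ⟨(mem_fixed_iff m lam v).1 hv.1, fixedInSub_val_zero m hm lam v hv⟩
  · intro hv
    exact mem_fixedInSub_of m hm lam v ((mem_fixed_iff m lam v).2 hv.1) hv.2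

lemma isRSubmodule_S (m : ℕ) (hm : 2 ≤ m) (lam : k) :
    IsRSubmodule k m lam (fixedInSub k m lam (m - 1)) := by
  refine ⟨{ carrier := {v | (∀ i, v (Sum.inl i) = 0) ∧ v (Sum.inr ⟨0, by omega⟩) = 0}
            add_mem' := ?_
            zero_mem' := ?_
            smul_mem' := ?_ }, ?_, fun v hv => hv.1, ?_⟩
  · rintro a b ⟨ha1, ha2⟩ ⟨hb1, hb2⟩
    exact ⟨fun i => by simp [ha1 i, hb1 i], by simp [ha2, hb2]⟩
  · exact ⟨fun i => rfl, rfl⟩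
  · rintro c a ⟨ha1, ha2⟩
    exact ⟨fun i => by simp [ha1 i], by simp [ha2]⟩
  · exact (fixedInSub_eq m hm lam).symm
  · intro M hM v hv
    obtain ⟨hv1, hv2⟩ := hv
    obtain ⟨hB, hDJ⟩ := commutant_blocks m lam M hM
    have hMb : M = Matrix.fromBlocks M.toBlocks₁₁ M.toBlocks₁₂ M.toBlocks₂₁ M.toBlocks₂₂ :=
      (Matrix.fromBlocks_toBlocks M).symm
    have hx0 : v ∘ Sum.inl = 0 := funext hv1
    constructor
    · intro i
      rw [hMb, Matrix.fromBlocks_mulVec]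
      simp only [Sum.elim_inl, Pi.add_apply, hx0, hB, Matrix.mulVec_zero, Matrix.zero_mulVec]
      simp
    · rw [hMb, Matrix.fromBlocks_mulVec]
      simp only [Sum.elim_inr, Pi.add_apply, hx0, Matrix.mulVec_zero]
      rw [mulVec_entry0 m (by omega) lam M.toBlocks₂₂ hDJ (v ∘ Sum.inr) hv2]
      simp

end KleinAux

/-- Let `k` be an algebraically closed field of characteristic `2`,
`λ ∈ k` and `m ≥ 2`. The fixed-point space `T` of `A_m(λ)`, as a module over the
endomorphism algebra `R = End_{kC₂²}(A_m(λ))`, is cyclic (there is `v₀ ∈ T` whose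
`R`-orbit is all of `T`), and its unique maximal proper `R`-submodule is exactly the set
`S` of fixed vectors lying in a subrepresentation isomorphic to `A_{m-1}(λ)`: `S` is a
proper `R`-submodule of `T` containing every proper `R`-submodule of `T`. -/
theorem fixed_space_cyclic_with_unique_maximal_submodule
    (k : Type*) [Field k] [IsAlgClosed k] [CharP k 2]
    (lam : k) (m : ℕ) (hm : 2 ≤ m) :
    (∃ v₀ ∈ fixedSet k m lam, ∀ v ∈ fixedSet k m lam,
      ∃ M, InCommutant k m lam M ∧ M.mulVec v₀ = v) ∧
    IsRSubmodule k m lam (fixedInSub k m lam (m - 1)) ∧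
    fixedInSub k m lam (m - 1) ≠ fixedSet k m lam ∧
    ∀ N : Set (Fin m ⊕ Fin m → k), IsRSubmodule k m lam N → N ≠ fixedSet k m lam →
      N ⊆ fixedInSub k m lam (m - 1) := by
  have h0m : 0 < m := by omega
  have hv0fix : (Sum.elim 0 (Pi.single ⟨0, h0m⟩ 1) : Fin m ⊕ Fin m → k) ∈ fixedSet k m lam := by
    rw [KleinAux.mem_fixed_iff]
    intro i
    simp
  have hv0ne : (Sum.elim 0 (Pi.single ⟨0, h0m⟩ 1) : Fin m ⊕ Fin m → k) (Sum.inr ⟨0, h0m⟩) ≠ 0 := by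
    simp
  refine ⟨⟨Sum.elim 0 (Pi.single ⟨0, h0m⟩ 1), hv0fix, ?_⟩, KleinAux.isRSubmodule_S m hm lam,
    ?_, ?_⟩
  · intro v hv
    exact KleinAux.cyc m h0m lam _ hv0fix hv0ne v hv
  · intro hEq
    have hmem : (Sum.elim 0 (Pi.single ⟨0, h0m⟩ 1) : Fin m ⊕ Fin m → k)
        ∈ fixedInSub k m lam (m - 1) := by
      rw [hEq]
      exact hv0fix
    exact hv0ne (KleinAux.fixedInSub_val_zero m hm lam _ hmem)
  · intro N hN hne
    obtain ⟨N', hcoe, hsub, hstab⟩ := hN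
    intro v hv
    apply KleinAux.mem_fixedInSub_of m hm lam v (hsub hv)
    by_contra hv0
    apply hne
    apply Set.Subset.antisymm hsub
    intro w hw
    obtain ⟨M, hM, hMv⟩ := KleinAux.cyc m h0m lam v (hsub hv) hv0 w hw
    have hvN : v ∈ N' := by rw [← hcoe] at hv; exact hv
    have hwN : M.mulVec v ∈ N' := hstab M hM v hvN
    rw [hMv] at hwN
    rw [← hcoe]
    exact hwN
end
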